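/- arXiv:2502.04613 — 5 statements merged into one kernel-verified Lean document; each statement's English description precedes it below -/
import Mathlib

section
/- Let φ(x) = ⟨x, log x⟩ (negative entropy, summed coordinatewise) on strictly positive vectors. If x, y, z are vectors with all entries at least ε > 0, then |⟨∇φ(x) − ∇φ(y), y − z⟩ − ⟨x − y, ∇φ(y) − ∇φ(z)⟩| ≤ (‖x−y‖² ‖y−z‖_∞)/ε² + (‖y−z‖² ‖x−y‖_∞)/ε². -/
lemma log_taylor_bound (ε a b : ℝ) (hε : 0 < ε) (ha : ε ≤ a) (hb : ε ≤ b) :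
    |Real.log a - Real.log b - (a - b) / b| ≤ (a - b) ^ 2 / ε ^ 2 := by
  have hpa : 0 < a := hε.trans_le ha
  have hpb : 0 < b := hε.trans_le hb
  have h1 : Real.log a - Real.log b ≤ (a - b) / b := by
    have h := Real.log_le_sub_one_of_pos (div_pos hpa hpb)
    rw [Real.log_div hpa.ne' hpb.ne'] at h
    calc Real.log a - Real.log b ≤ a / b - 1 := h
      _ = (a - b) / b := by field_simp
  have h2 : Real.log b - Real.log a ≤ (b - a) / a := by
    have h := Real.log_le_sub_one_of_pos (div_pos hpb hpa)
    rw [Real.log_div hpb.ne' hpa.ne'] at h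
    calc Real.log b - Real.log a ≤ b / a - 1 := h
      _ = (b - a) / a := by field_simp
  rw [abs_le]
  constructor
  · have key : (a - b) / a - (a - b) / b = -((a - b) ^ 2 / (a * b)) := by
      field_simp; ring
    have hab : ε ^ 2 ≤ a * b := by nlinarith
    have hmono : (a - b) ^ 2 / (a * b) ≤ (a - b) ^ 2 / ε ^ 2 := by
      gcongr
    have h3 : (a - b) / a ≤ Real.log a - Real.log b := by
      have e : (a - b) / a = -((b - a) / a) := by ring
      linarith
    linarith
  · have : (0:ℝ) ≤ (a - b) ^ 2 / ε ^ 2 := by positivity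
    linarith

/-- Non-symmetry error bound for the negative-entropy Bregman kernel:
for vectors with entries bounded below by `ε > 0`,
`|⟨∇φ(x) − ∇φ(y), y − z⟩ − ⟨x − y, ∇φ(y) − ∇φ(z)⟩|` is bounded by
`‖x−y‖²‖y−z‖_∞/ε² + ‖y−z‖²‖x−y‖_∞/ε²`, where `∇φ(x) = log x + 1` coordinatewise
(so gradient differences are coordinatewise log differences). -/
theorem entropy_nonsym_bound (n : ℕ) (ε : ℝ) (hε : 0 < ε) (x y z : Fin n → ℝ)
    (hx : ∀ i, ε ≤ x i) (hy : ∀ i, ε ≤ y i) (hz : ∀ i, ε ≤ z i) :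
    |(∑ i, (Real.log (x i) - Real.log (y i)) * (y i - z i)) -
        ∑ i, (x i - y i) * (Real.log (y i) - Real.log (z i))| ≤
      (∑ i, (x i - y i) ^ 2) * (⨆ i : Fin n, |y i - z i|) / ε ^ 2 +
      (∑ i, (y i - z i) ^ 2) * (⨆ i : Fin n, |x i - y i|) / ε ^ 2 := by
  set S₁ : ℝ := ⨆ i : Fin n, |y i - z i| with hS₁
  set S₂ : ℝ := ⨆ i : Fin n, |x i - y i| with hS₂
  have hle₁ : ∀ i, |y i - z i| ≤ S₁ := by
    intro i
    rw [hS₁]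
    exact le_ciSup (f := fun j => |y j - z j|) (Set.Finite.bddAbove (Set.finite_range _)) i
  have hle₂ : ∀ i, |x i - y i| ≤ S₂ := by
    intro i
    rw [hS₂]
    exact le_ciSup (f := fun j => |x j - y j|) (Set.Finite.bddAbove (Set.finite_range _)) i
  have key : ∀ i, |(Real.log (x i) - Real.log (y i)) * (y i - z i) -
      (x i - y i) * (Real.log (y i) - Real.log (z i))| ≤
      (x i - y i) ^ 2 * S₁ / ε ^ 2 + (y i - z i) ^ 2 * S₂ / ε ^ 2 := by
    intro i
    have e1 : |Real.log (x i) - Real.log (y i) - (x i - y i) / y i| ≤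
        (x i - y i) ^ 2 / ε ^ 2 := log_taylor_bound ε _ _ hε (hx i) (hy i)
    have e2 : |Real.log (z i) - Real.log (y i) - (z i - y i) / y i| ≤
        (z i - y i) ^ 2 / ε ^ 2 := log_taylor_bound ε _ _ hε (hz i) (hy i)
    have decomp : (Real.log (x i) - Real.log (y i)) * (y i - z i) -
        (x i - y i) * (Real.log (y i) - Real.log (z i)) =
        (Real.log (x i) - Real.log (y i) - (x i - y i) / y i) * (y i - z i)
        + (x i - y i) * (Real.log (z i) - Real.log (y i) - (z i - y i) / y i) := by
      have hyi : y i ≠ 0 := (hε.trans_le (hy i)).ne'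
      field_simp
      ring
    rw [decomp]
    calc |(Real.log (x i) - Real.log (y i) - (x i - y i) / y i) * (y i - z i)
        + (x i - y i) * (Real.log (z i) - Real.log (y i) - (z i - y i) / y i)|
        ≤ |(Real.log (x i) - Real.log (y i) - (x i - y i) / y i) * (y i - z i)|
        + |(x i - y i) * (Real.log (z i) - Real.log (y i) - (z i - y i) / y i)| :=
          abs_add_le _ _
      _ = |Real.log (x i) - Real.log (y i) - (x i - y i) / y i| * |y i - z i|
        + |x i - y i| * |Real.log (z i) - Real.log (y i) - (z i - y i) / y i| := by
          rw [abs_mul, abs_mul]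
      _ ≤ ((x i - y i) ^ 2 / ε ^ 2) * S₁ + S₂ * ((z i - y i) ^ 2 / ε ^ 2) := by
          gcongr <;> first
            | exact hle₁ i
            | exact hle₂ i
            | exact (abs_nonneg _).trans (hle₁ i)
            | exact (abs_nonneg _).trans (hle₂ i)
      _ = (x i - y i) ^ 2 * S₁ / ε ^ 2 + (y i - z i) ^ 2 * S₂ / ε ^ 2 := by ring
  calc |(∑ i, (Real.log (x i) - Real.log (y i)) * (y i - z i)) -
        ∑ i, (x i - y i) * (Real.log (y i) - Real.log (z i))|
      = |∑ i, ((Real.log (x i) - Real.log (y i)) * (y i - z i) -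
          (x i - y i) * (Real.log (y i) - Real.log (z i)))| := by
        rw [Finset.sum_sub_distrib]
    _ ≤ ∑ i, |(Real.log (x i) - Real.log (y i)) * (y i - z i) -
          (x i - y i) * (Real.log (y i) - Real.log (z i))| :=
        Finset.abs_sum_le_sum_abs _ _
    _ ≤ ∑ i, ((x i - y i) ^ 2 * S₁ / ε ^ 2 + (y i - z i) ^ 2 * S₂ / ε ^ 2) :=
        Finset.sum_le_sum fun i _ => key i
    _ = (∑ i, (x i - y i) ^ 2) * S₁ / ε ^ 2 + (∑ i, (y i - z i) ^ 2) * S₂ / ε ^ 2 := by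
        rw [Finset.sum_add_distrib, ← Finset.sum_div, ← Finset.sum_div,
          ← Finset.sum_mul, ← Finset.sum_mul]
end

section
/- Let X* be the optimal solution of the entropy-regularized optimal transport problem min { ⟨C,X⟩ + ⟨log X, X⟩ : X ∈ ℝ^{r×r}, X ≥ 0, X𝟙 = u, Xᵀ𝟙 = v } with u, v > 0 entrywise and 𝟙ᵀu = 𝟙ᵀv = 1. Then X* can be written as X* = exp[−C + λ𝟙ᵀ + 𝟙μᵀ] for some λ, μ ∈ ℝ^r satisfying ‖λ − log u‖_∞ ≤ 1.5‖C‖_∞ + log r and ‖μ − log v‖_∞ ≤ 1.5‖C‖_∞ + log r. -/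
/-- Objective of the entropy-regularized optimal transport problem. -/
noncomputable def entOTobj {r : ℕ} (C X : Fin r → Fin r → ℝ) : ℝ :=
  (∑ i, ∑ j, C i j * X i j) + ∑ i, ∑ j, X i j * Real.log (X i j)

/-- Feasible set of the entropy-regularized OT problem with marginals `u, v`. -/
def entOTfeas {r : ℕ} (u v : Fin r → ℝ) (X : Fin r → Fin r → ℝ) : Prop :=
  (∀ i j, 0 ≤ X i j) ∧ (∀ i, ∑ j, X i j = u i) ∧ (∀ j, ∑ i, X i j = v j)

/-! A minimizer `X` is entrywise positive: if `Xᵢⱼ = 0`, convexity of `x log x` gives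
`obj (X + t (u vᵀ - X)) - obj X ≤ t (obj (u vᵀ) - obj X + uᵢ vⱼ log t)`, which is negative for
small `t > 0`. At a positive minimizer the objective is stationary along the zero-margin
directions `(eᵢ - eᵢ') (eⱼ - eⱼ')ᵀ`, so `C + log X` satisfies the rectangle identity and splits
as `λ𝟙ᵀ + 𝟙μᵀ`; shifting a constant from `μ` to `λ` makes `∑ exp λ = ∑ exp μ = exp L`.
Log-sum-exp moves by at most `‖C‖_∞` when its arguments do, so each row sum gives
`|log uᵢ - λᵢ - L| ≤ ‖C‖_∞`, and the total mass `1` gives `|2L| ≤ ‖C‖_∞`. -/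

open Real Finset Filter Topology

lemma abs_log_sum_exp_add_sub_le {ι : Type*} [Fintype ι] [Nonempty ι] {c y : ι → ℝ} {K : ℝ}
    (hc : ∀ i, |c i| ≤ K) :
    |log (∑ i, exp (c i + y i)) - log (∑ i, exp (y i))| ≤ K := by
  have hS : 0 < ∑ i, exp (y i) := sum_pos (fun i _ => exp_pos _) univ_nonempty
  have hT : 0 < ∑ i, exp (c i + y i) := sum_pos (fun i _ => exp_pos _) univ_nonempty
  have hlog (a : ℝ) : log (exp a * ∑ i, exp (y i)) = a + log (∑ i, exp (y i)) := by
    rw [log_mul (exp_pos a).ne' hS.ne', log_exp]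
  have hlo : exp (-K) * ∑ i, exp (y i) ≤ ∑ i, exp (c i + y i) := by
    rw [mul_sum]
    gcongr with i
    rw [← exp_add]
    gcongr
    linarith [(abs_le.mp (hc i)).1]
  have hhi : ∑ i, exp (c i + y i) ≤ exp K * ∑ i, exp (y i) := by
    rw [mul_sum]
    gcongr with i
    rw [← exp_add]
    gcongr
    linarith [(abs_le.mp (hc i)).2]
  have h1 := log_le_log (by positivity) hlo
  have h2 := log_le_log hT hhi
  rw [hlog] at h1 h2
  rw [abs_le]
  constructor <;> linarith

lemma exists_eq_add_of_add_eq_add {ι κ R : Type*} [Nonempty ι] [Nonempty κ] [AddCommGroup R]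
    {g : ι → κ → R} (hg : ∀ i i' j j', g i j + g i' j' = g i j' + g i' j) :
    ∃ (a : ι → R) (b : κ → R), ∀ i j, g i j = a i + b j := by
  obtain ⟨i₀⟩ := ‹Nonempty ι›
  obtain ⟨j₀⟩ := ‹Nonempty κ›
  exact ⟨fun i => g i j₀, fun j => g i₀ j - g i₀ j₀, fun i j => by
    rw [← add_sub_assoc, eq_sub_iff_add_eq, hg]⟩

lemma sum_single_sub_single_mul {ι R : Type*} [Fintype ι] [DecidableEq ι] [NonAssocRing R]
    (f : ι → R) (i i' : ι) :
    ∑ a, (Pi.single i 1 - Pi.single i' 1 : ι → R) a * f a = f i - f i' := by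
  simp [sub_mul, sum_sub_distrib, Pi.single_apply]

lemma exists_sum_exp_add_eq_sum_exp_sub {ι κ : Type*} [Fintype ι] [Fintype κ] [Nonempty ι]
    [Nonempty κ] (a : ι → ℝ) (b : κ → ℝ) :
    ∃ c : ℝ, ∑ i, exp (a i + c) = ∑ j, exp (b j - c) := by
  have hA : 0 < ∑ i, exp (a i) := sum_pos (fun i _ => exp_pos _) univ_nonempty
  have hB : 0 < ∑ j, exp (b j) := sum_pos (fun j _ => exp_pos _) univ_nonempty
  refine ⟨(log (∑ j, exp (b j)) - log (∑ i, exp (a i))) / 2, ?_⟩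
  simp_rw [exp_add, exp_sub, ← sum_mul, ← sum_div]
  rw [eq_div_iff (exp_pos _).ne', mul_assoc, ← exp_add, add_halves, exp_sub, exp_log hA,
    exp_log hB]
  field_simp

lemma abs_sub_log_sum_exp_le {ι κ : Type*} [Fintype ι] [Fintype κ] [Nonempty ι] [Nonempty κ]
    {C : ι → κ → ℝ} {lam : ι → ℝ} {mu : κ → ℝ} {K : ℝ} (hC : ∀ i j, |C i j| ≤ K)
    (hbal : ∑ i, exp (lam i) = ∑ j, exp (mu j))
    (hsum : ∑ i, ∑ j, exp (-C i j + lam i + mu j) = 1) (i : ι) :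
    |lam i - log (∑ j, exp (-C i j + lam i + mu j))| ≤ 3 / 2 * K := by
  set L := log (∑ j, exp (mu j))
  have hrow : |log (∑ j, exp (-C i j + lam i + mu j)) - (lam i + L)| ≤ K := by
    have h := abs_log_sum_exp_add_sub_le (y := fun j => lam i + mu j)
      fun j => (abs_neg _).trans_le (hC i j)
    simp_rw [exp_add (lam i), ← mul_sum, ← add_assoc] at h
    rwa [log_mul (exp_pos _).ne' (sum_pos (fun j _ => exp_pos _) univ_nonempty).ne',
      log_exp] at h
  have htotal : |2 * L| ≤ K := by
    have h := abs_log_sum_exp_add_sub_le (ι := ι × κ) (y := fun p => lam p.1 + mu p.2)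
      fun p => (abs_neg _).trans_le (hC p.1 p.2)
    simp_rw [Fintype.sum_prod_type, ← add_assoc, hsum, log_one, exp_add, ← mul_sum, ← sum_mul,
      hbal] at h
    rwa [log_mul (sum_pos (fun j _ => exp_pos _) univ_nonempty).ne'
      (sum_pos (fun j _ => exp_pos _) univ_nonempty).ne', zero_sub, abs_neg, ← two_mul] at h
  rw [abs_le] at hrow htotal ⊢
  constructor <;> linarith [hrow.1, hrow.2, htotal.1, htotal.2]

section

variable {r : ℕ} {C X D : Fin r → Fin r → ℝ} {u v : Fin r → ℝ}

lemma entOTobj_eq_sum_sum (C X : Fin r → Fin r → ℝ) :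
    entOTobj C X = ∑ i, ∑ j, (C i j * X i j + X i j * log (X i j)) := by
  simp only [entOTobj, ← sum_add_distrib]

lemma entOTfeas_mul (hu : ∀ i, 0 ≤ u i) (hv : ∀ j, 0 ≤ v j) (husum : ∑ i, u i = 1)
    (hvsum : ∑ j, v j = 1) : entOTfeas u v fun i j => u i * v j :=
  ⟨fun i j => mul_nonneg (hu i) (hv j), fun i => by rw [← mul_sum, hvsum, mul_one],
    fun j => by rw [← sum_mul, husum, one_mul]⟩

lemma entOTfeas.add_mul {t : ℝ} (hX : entOTfeas u v X) (hrow : ∀ i, ∑ j, D i j = 0)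
    (hcol : ∀ j, ∑ i, D i j = 0) (hnonneg : ∀ i j, 0 ≤ X i j + t * D i j) :
    entOTfeas u v fun i j => X i j + t * D i j :=
  ⟨hnonneg, fun i => by rw [sum_add_distrib, ← mul_sum, hrow, hX.2.1, mul_zero, add_zero],
    fun j => by rw [sum_add_distrib, ← mul_sum, hcol, hX.2.2, mul_zero, add_zero]⟩

lemma hasDerivAt_entOTobj_add_mul (hX : ∀ i j, 0 < X i j) :
    HasDerivAt (fun t => entOTobj C fun i j => X i j + t * D i j)
      (∑ i, ∑ j, D i j * (C i j + log (X i j) + 1)) 0 := by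
  simp_rw [entOTobj_eq_sum_sum]
  refine HasDerivAt.fun_sum fun i _ => HasDerivAt.fun_sum fun j _ => ?_
  have hline : HasDerivAt (fun t => X i j + t * D i j) (D i j) 0 := by
    simpa using ((hasDerivAt_id (0 : ℝ)).mul_const (D i j)).const_add (X i j)
  have hent : HasDerivAt (fun x => x * log x) (log (X i j) + 1) (X i j + 0 * D i j) := by
    simpa using hasDerivAt_mul_log (hX i j).ne'
  refine ((hline.const_mul (C i j)).fun_add (hent.comp 0 hline)).congr_deriv ?_
  ring

lemma eventually_entOTfeas_add_mul (hX : entOTfeas u v X) (hpos : ∀ i j, 0 < X i j)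
    (hrow : ∀ i, ∑ j, D i j = 0) (hcol : ∀ j, ∑ i, D i j = 0) :
    ∀ᶠ t in 𝓝 0, entOTfeas u v fun i j => X i j + t * D i j := by
  have hnonneg : ∀ᶠ t in 𝓝 (0 : ℝ), ∀ i j, 0 ≤ X i j + t * D i j := by
    refine eventually_all.2 fun i => eventually_all.2 fun j => ?_
    have hcont : Tendsto (fun t : ℝ => X i j + t * D i j) (𝓝 0) (𝓝 (X i j)) :=
      (by fun_prop : Continuous fun t : ℝ => X i j + t * D i j).tendsto' 0 _ (by simp)
    exact (hcont.eventually (lt_mem_nhds (hpos i j))).mono fun _ h => h.le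
  exact hnonneg.mono fun t ht => hX.add_mul hrow hcol ht

lemma entOT_stationary (hX : entOTfeas u v X) (hpos : ∀ i j, 0 < X i j)
    (hopt : ∀ Y, entOTfeas u v Y → entOTobj C X ≤ entOTobj C Y)
    (hrow : ∀ i, ∑ j, D i j = 0) (hcol : ∀ j, ∑ i, D i j = 0) :
    ∑ i, ∑ j, D i j * (C i j + log (X i j) + 1) = 0 := by
  have hmin : IsLocalMin (fun t => entOTobj C fun i j => X i j + t * D i j) 0 :=
    (eventually_entOTfeas_add_mul hX hpos hrow hcol).mono fun t ht => by
      simpa using hopt _ ht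
  exact hmin.hasDerivAt_eq_zero (hasDerivAt_entOTobj_add_mul hpos)

lemma entOT_rectangle (hX : entOTfeas u v X) (hpos : ∀ i j, 0 < X i j)
    (hopt : ∀ Y, entOTfeas u v Y → entOTobj C X ≤ entOTobj C Y) (i i' j j' : Fin r) :
    C i j + log (X i j) + (C i' j' + log (X i' j')) =
      C i j' + log (X i j') + (C i' j + log (X i' j)) := by
  set p : Fin r → ℝ := Pi.single i 1 - Pi.single i' 1
  set q : Fin r → ℝ := Pi.single j 1 - Pi.single j' 1
  have hp : ∑ a, p a = 0 := by simp [p, sum_sub_distrib]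
  have hq : ∑ b, q b = 0 := by simp [q, sum_sub_distrib]
  have h := entOT_stationary (C := C) (D := fun a b => p a * q b) hX hpos hopt
    (fun a => by rw [← mul_sum, hq, mul_zero]) (fun b => by rw [← sum_mul, hp, zero_mul])
  simp_rw [p, q, mul_assoc, ← mul_sum, sum_single_sub_single_mul] at h
  linarith

lemma entOTobj_add_mul_sub_le {Y : Fin r → Fin r → ℝ} {t : ℝ} {i₀ j₀ : Fin r}
    (hX : ∀ i j, 0 ≤ X i j) (hY : ∀ i j, 0 ≤ Y i j) (ht0 : 0 < t) (ht1 : t ≤ 1)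
    (hX0 : X i₀ j₀ = 0) :
    entOTobj C (fun i j => X i j + t * (Y i j - X i j)) ≤
      (1 - t) * entOTobj C X + t * entOTobj C Y + t * Y i₀ j₀ * log t := by
  set gap : Fin r → Fin r → ℝ := fun i j =>
    (1 - t) * (C i j * X i j + X i j * log (X i j)) + t * (C i j * Y i j + Y i j * log (Y i j)) -
      (C i j * (X i j + t * (Y i j - X i j)) +
        (X i j + t * (Y i j - X i j)) * log (X i j + t * (Y i j - X i j)))
  have hgap : ∀ i j, 0 ≤ gap i j := fun i j => by
    have h := convexOn_mul_log.2 (Set.mem_Ici.2 (hX i j)) (Set.mem_Ici.2 (hY i j))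
      (sub_nonneg.2 ht1) ht0.le (sub_add_cancel 1 t)
    simp only [smul_eq_mul] at h
    simp only [gap]
    rw [show X i j + t * (Y i j - X i j) = (1 - t) * X i j + t * Y i j by ring]
    linarith
  have hgap₀ : gap i₀ j₀ = -(t * Y i₀ j₀ * log t) := by
    have h := negMulLog_mul t (Y i₀ j₀)
    simp only [negMulLog] at h
    simp only [gap, hX0, zero_mul, mul_zero, zero_add, sub_zero, add_zero]
    linarith
  have hsum : ∑ i, ∑ j, gap i j =
      (1 - t) * entOTobj C X + t * entOTobj C Y -
        entOTobj C (fun i j => X i j + t * (Y i j - X i j)) := by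
    simp only [gap, entOTobj_eq_sum_sum, ← mul_sum, sum_sub_distrib, sum_add_distrib]
  have hle : gap i₀ j₀ ≤ ∑ i, ∑ j, gap i j :=
    (single_le_sum (fun j _ => hgap i₀ j) (mem_univ j₀)).trans
      (single_le_sum (fun i _ => sum_nonneg fun j _ => hgap i j) (mem_univ i₀))
  linarith

lemma entOT_minimizer_pos (hu : ∀ i, 0 < u i) (hv : ∀ j, 0 < v j) (husum : ∑ i, u i = 1)
    (hvsum : ∑ j, v j = 1) (hX : entOTfeas u v X)
    (hopt : ∀ Y, entOTfeas u v Y → entOTobj C X ≤ entOTobj C Y) (i₀ j₀ : Fin r) :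
    0 < X i₀ j₀ := by
  refine (hX.1 i₀ j₀).lt_of_ne' fun hX0 => ?_
  set Y : Fin r → Fin r → ℝ := fun i j => u i * v j
  have hY : entOTfeas u v Y :=
    entOTfeas_mul (fun i => (hu i).le) (fun j => (hv j).le) husum hvsum
  have hbound : ∀ t, 0 < t → t ≤ 1 → entOTobj C X - entOTobj C Y ≤ Y i₀ j₀ * log t := by
    intro t ht0 ht1
    have hZ := hX.add_mul (t := t) (D := fun i j => Y i j - X i j)
      (fun i => by rw [sum_sub_distrib, hX.2.1, hY.2.1, sub_self])
      (fun j => by rw [sum_sub_distrib, hX.2.2, hY.2.2, sub_self])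
      (fun i j => by nlinarith [hX.1 i j, hY.1 i j])
    have := (hopt _ hZ).trans (entOTobj_add_mul_sub_le hX.1 hY.1 ht0 ht1 hX0)
    nlinarith
  have hlog : Tendsto (fun t => Y i₀ j₀ * log t) (𝓝[>] 0) atBot :=
    tendsto_log_nhdsGT_zero.const_mul_atBot (mul_pos (hu i₀) (hv j₀))
  have hIoc : ∀ᶠ t in 𝓝[>] (0 : ℝ), t ∈ Set.Ioc 0 1 := Ioc_mem_nhdsGT zero_lt_one
  obtain ⟨t, ht, hlt⟩ := (hIoc.and
    (hlog.eventually_lt_atBot (entOTobj C X - entOTobj C Y))).exists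
  exact (hbound t ht.1 ht.2).not_gt hlt

lemma entOT_minimizer_eq_exp [Nonempty (Fin r)] (hu : ∀ i, 0 < u i) (hv : ∀ j, 0 < v j)
    (husum : ∑ i, u i = 1) (hvsum : ∑ j, v j = 1) (hX : entOTfeas u v X)
    (hopt : ∀ Y, entOTfeas u v Y → entOTobj C X ≤ entOTobj C Y) :
    ∃ lam mu : Fin r → ℝ, (∀ i j, X i j = exp (-C i j + lam i + mu j)) ∧
      ∑ i, exp (lam i) = ∑ j, exp (mu j) := by
  have hpos := entOT_minimizer_pos hu hv husum hvsum hX hopt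
  obtain ⟨a, b, hab⟩ := exists_eq_add_of_add_eq_add (entOT_rectangle hX hpos hopt)
  obtain ⟨c, hc⟩ := exists_sum_exp_add_eq_sum_exp_sub a b
  refine ⟨fun i => a i + c, fun j => b j - c, fun i j => ?_, hc⟩
  rw [← exp_log (hpos i j)]
  congr 1
  linarith [hab i j]

end

theorem entOT_dual_bounds_general (r : ℕ) (C : Fin r → Fin r → ℝ) (u v : Fin r → ℝ)
    (hu : ∀ i, 0 < u i) (hv : ∀ i, 0 < v i)
    (husum : ∑ i, u i = 1) (hvsum : ∑ i, v i = 1)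
    (X : Fin r → Fin r → ℝ) (hfeas : entOTfeas u v X)
    (hopt : ∀ Y, entOTfeas u v Y → entOTobj C X ≤ entOTobj C Y) :
    ∃ lam mu : Fin r → ℝ,
      (∀ i j, X i j = Real.exp (-C i j + lam i + mu j)) ∧
      (∀ i, |lam i - Real.log (u i)| ≤ 1.5 * (⨆ i : Fin r, ⨆ j : Fin r, |C i j|) + Real.log r) ∧
      (∀ j, |mu j - Real.log (v j)| ≤ 1.5 * (⨆ i : Fin r, ⨆ j : Fin r, |C i j|) + Real.log r) := by
  have : Nonempty (Fin r) := univ_nonempty_iff.1 (nonempty_of_sum_ne_zero (husum ▸ one_ne_zero))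
  obtain ⟨lam, mu, hX, hbal⟩ := entOT_minimizer_eq_exp hu hv husum hvsum hfeas hopt
  set K := ⨆ i : Fin r, ⨆ j : Fin r, |C i j|
  have hC : ∀ i j, |C i j| ≤ K := fun i j =>
    (le_ciSup (Finite.bddAbove_range _) j).trans
      (le_ciSup (Finite.bddAbove_range fun i => ⨆ j, |C i j|) i)
  have hrow : ∀ i, u i = ∑ j, exp (-C i j + lam i + mu j) := fun i => by
    simp_rw [← hX, hfeas.2.1]
  have hcol : ∀ j, v j = ∑ i, exp (-C i j + mu j + lam i) := fun j => by
    simp_rw [add_right_comm _ (mu j), ← hX, hfeas.2.2]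
  have hlogr : 0 ≤ log r := log_natCast_nonneg r
  refine ⟨lam, mu, hX, fun i => ?_, fun j => ?_⟩
  · have := abs_sub_log_sum_exp_le hC hbal (by simp_rw [← hrow, husum]) i
    rw [← hrow] at this
    linarith
  · have := abs_sub_log_sum_exp_le (C := fun j i => C i j) (fun j i => hC i j) hbal.symm
      (by simp_rw [← hcol, hvsum]) j
    rw [← hcol] at this
    linarith

/-- The optimal solution of the entropy-regularized OT problem with strictly positive
probability marginals has the form `X* = exp[−C + λ𝟙ᵀ + 𝟙μᵀ]` with dual variables
satisfying `‖λ − log u‖_∞ ≤ 1.5‖C‖_∞ + log r` and `‖μ − log v‖_∞ ≤ 1.5‖C‖_∞ + log r`. -/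
theorem entOT_dual_bounds (r : ℕ) (hr : 0 < r) (C : Fin r → Fin r → ℝ) (u v : Fin r → ℝ)
    (hu : ∀ i, 0 < u i) (hv : ∀ i, 0 < v i)
    (husum : ∑ i, u i = 1) (hvsum : ∑ i, v i = 1)
    (X : Fin r → Fin r → ℝ) (hfeas : entOTfeas u v X)
    (hopt : ∀ Y, entOTfeas u v Y → entOTobj C X ≤ entOTobj C Y) :
    ∃ lam mu : Fin r → ℝ,
      (∀ i j, X i j = Real.exp (-C i j + lam i + mu j)) ∧
      (∀ i, |lam i - Real.log (u i)| ≤ 1.5 * (⨆ i : Fin r, ⨆ j : Fin r, |C i j|) + Real.log r) ∧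
      (∀ j, |mu j - Real.log (v j)| ≤ 1.5 * (⨆ i : Fin r, ⨆ j : Fin r, |C i j|) + Real.log r) :=
  entOT_dual_bounds_general r C u v hu hv husum hvsum X hfeas hopt
end

section
/- Under the setting of the entropy-regularized optimal transport problem with marginals u, v > 0 (probability vectors) and cost C, the optimal solution X* satisfies min_{i,j} X*(i,j) ≥ (min_{i,j}{u(i), v(j)})² / (r² exp[4‖C‖_∞]). -/
open Real Finset Filter Topology

lemma mul_log_sub_mul_log_le {s t : ℝ} (hs : 0 < s) (ht : 0 ≤ t) :
    s * log s - t * log t ≤ (s - t) * (log s + 1) := by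
  suffices t * log (s / t) ≤ s - t by
    rcases ht.eq_or_lt with rfl | ht
    · simp; linarith
    · rw [log_div hs.ne' ht.ne'] at this; linarith
  rcases ht.eq_or_lt with rfl | ht
  · simpa using hs.le
  · calc t * log (s / t) ≤ t * (s / t - 1) :=
          mul_le_mul_of_nonneg_left (log_le_sub_one_of_pos (by positivity)) ht.le
      _ = s - t := by field_simp

lemma entOTobj_sub_le {r : ℕ} (C X Y : Fin r → Fin r → ℝ) (hX : ∀ i j, 0 ≤ X i j)
    (hY : ∀ i j, Y i j ≠ X i j → 0 < Y i j) :
    entOTobj C Y - entOTobj C X ≤ ∑ i, ∑ j, (Y i j - X i j) * (C i j + log (Y i j) + 1) := by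
  have hsplit : entOTobj C Y - entOTobj C X = ∑ i, ∑ j,
      (C i j * (Y i j - X i j) + (Y i j * log (Y i j) - X i j * log (X i j))) := by
    simp only [entOTobj, mul_sub, ← sum_sub_distrib, ← sum_add_distrib]
    congr! 2; ring
  rw [hsplit]
  gcongr with i _ j _
  by_cases h : Y i j = X i j
  · simp [h]
  · nlinarith [mul_log_sub_mul_log_le (hY i j h) (hX i j)]

section CycleDir

variable {ι : Type*} [DecidableEq ι]

def cycleDir (a c b d : ι) (i j : ι) : ℝ :=
  (Pi.single a 1 - Pi.single c 1 : ι → ℝ) i * (Pi.single b 1 - Pi.single d 1 : ι → ℝ) j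

lemma sum_cycleDir_right [Fintype ι] (a c b d i : ι) : ∑ j, cycleDir a c b d i j = 0 := by
  simp [cycleDir, ← mul_sum, sum_sub_distrib, Finset.sum_pi_single']

lemma sum_cycleDir_left [Fintype ι] (a c b d j : ι) : ∑ i, cycleDir a c b d i j = 0 := by
  simp [cycleDir, ← sum_mul, sum_sub_distrib, Finset.sum_pi_single']

lemma sum_sum_cycleDir_mul [Fintype ι] (a c b d : ι) (G : ι → ι → ℝ) :
    ∑ i, ∑ j, cycleDir a c b d i j * G i j = G a b - G a d - G c b + G c d := by
  simp [cycleDir, sub_mul, Finset.sum_sub_distrib, Pi.single_apply, Finset.sum_ite_eq']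
  ring

lemma cycleDir_eq_neg_one_of_neg {a c b d i j : ι} (h : cycleDir a c b d i j < 0) :
    cycleDir a c b d i j = -1 ∧ (i = a ∧ j = d ∨ i = c ∧ j = b) := by
  simp only [cycleDir, Pi.sub_apply, Pi.single_apply] at h ⊢
  split_ifs at h ⊢ <;> simp_all <;> linarith

lemma add_mul_cycleDir_pos {X : ι → ι → ℝ} (hX : ∀ i j, 0 ≤ X i j) {a c b d : ι} {ε : ℝ}
    (hε : 0 < ε) (had : ε < X a d) (hcb : ε < X c b) {i j : ι} (h : cycleDir a c b d i j ≠ 0) :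
    0 < X i j + ε * cycleDir a c b d i j := by
  rcases h.lt_or_gt with hneg | hpos
  · obtain ⟨hD, ⟨rfl, rfl⟩ | ⟨rfl, rfl⟩⟩ := cycleDir_eq_neg_one_of_neg hneg <;>
      rw [hD] <;> linarith
  · exact add_pos_of_nonneg_of_pos (hX i j) (mul_pos hε hpos)

end CycleDir

lemma entOTfeas_add_mul_cycleDir {r : ℕ} {u v : Fin r → ℝ} {X : Fin r → Fin r → ℝ}
    (hX : entOTfeas u v X) {a c b d : Fin r} {ε : ℝ} (hε : 0 < ε) (had : ε < X a d) (hcb : ε < X c b) :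
    entOTfeas u v (fun i j => X i j + ε * cycleDir a c b d i j) := by
  obtain ⟨hnonneg, hrow, hcol⟩ := hX
  refine ⟨fun i j => ?_, fun i => ?_, fun j => ?_⟩
  · by_cases h : cycleDir a c b d i j = 0
    · simpa [h] using hnonneg i j
    · exact (add_mul_cycleDir_pos hnonneg hε had hcb h).le
  · simp [sum_add_distrib, ← mul_sum, sum_cycleDir_right, hrow]
  · simp [sum_add_distrib, ← mul_sum, sum_cycleDir_left, hcol]

lemma exists_sum_div_card_le {ι : Type*} [Fintype ι] [Nonempty ι] (f : ι → ℝ) :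
    ∃ j, (∑ i, f i) / Fintype.card ι ≤ f j := by
  obtain ⟨j, -, hj⟩ := exists_le_of_sum_le (s := univ) univ_nonempty
    (f := fun _ => (∑ i, f i) / Fintype.card ι) (g := f)
    (by simp [card_univ, mul_div_cancel₀, Fintype.card_ne_zero])
  exact ⟨j, hj⟩

lemma abs_le_iSup_iSup_abs {ι : Type*} [Finite ι] (C : ι → ι → ℝ) (p q : ι) :
    |C p q| ≤ ⨆ i, ⨆ j, |C i j| :=
  (Finite.le_ciSup (fun j => |C p j|) q).trans (Finite.le_ciSup (fun i => ⨆ j, |C i j|) p)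

lemma cycle_cost_le {ι : Type*} [Finite ι] (C : ι → ι → ℝ) (a b c d : ι) :
    C a b + C c d - C a d - C c b ≤ 4 * ⨆ i, ⨆ j, |C i j| := by
  have := abs_le_iSup_iSup_abs C
  linarith [le_abs_self (C a b), le_abs_self (C c d), neg_abs_le (C a d), neg_abs_le (C c b),
    this a b, this c d, this a d, this c b]

section Optimality

variable {r : ℕ} {C : Fin r → Fin r → ℝ} {u v : Fin r → ℝ} {X : Fin r → Fin r → ℝ}

lemma entOTfeas.left_nonneg (hfeas : entOTfeas u v X) (i : Fin r) : 0 ≤ u i :=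
  hfeas.2.1 i ▸ sum_nonneg fun j _ => hfeas.1 i j

lemma entOTfeas.right_nonneg (hfeas : entOTfeas u v X) (j : Fin r) : 0 ≤ v j :=
  hfeas.2.2 j ▸ sum_nonneg fun i _ => hfeas.1 i j

lemma entOTfeas.le_one (hfeas : entOTfeas u v X) (husum : ∑ i, u i = 1) (i j : Fin r) :
    X i j ≤ 1 :=
  calc X i j ≤ ∑ j, X i j := single_le_sum (fun j _ => hfeas.1 i j) (mem_univ j)
    _ = u i := hfeas.2.1 i
    _ ≤ ∑ i, u i := single_le_sum (fun i _ => hfeas.left_nonneg i) (mem_univ i)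
    _ = 1 := husum

lemma entOT_cycle_of_pos (hfeas : entOTfeas u v X)
    (hopt : ∀ Y, entOTfeas u v Y → entOTobj C X ≤ entOTobj C Y)
    {a c b d : Fin r} (hac : a ≠ c) (hbd : b ≠ d) {ε : ℝ} (hε : 0 < ε)
    (had : ε < X a d) (hcb : ε < X c b) :
    (X a d - ε) * (X c b - ε) ≤
      exp (C a b + C c d - C a d - C c b) * ((X a b + ε) * (X c d + ε)) := by
  set Y : Fin r → Fin r → ℝ := fun i j => X i j + ε * cycleDir a c b d i j
  set G : Fin r → Fin r → ℝ := fun i j => C i j + log (Y i j) + 1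
  have hY_pos : ∀ i j, Y i j ≠ X i j → 0 < Y i j := fun i j h =>
    add_mul_cycleDir_pos hfeas.1 hε had hcb (by rintro hD; simp [Y, hD] at h)
  have hdescent : 0 ≤ ε * (G a b - G a d - G c b + G c d) :=
    calc 0 ≤ entOTobj C Y - entOTobj C X :=
          sub_nonneg.2 (hopt Y (entOTfeas_add_mul_cycleDir hfeas hε had hcb))
      _ ≤ ∑ i, ∑ j, (Y i j - X i j) * G i j := entOTobj_sub_le C X Y hfeas.1 hY_pos
      _ = ε * ∑ i, ∑ j, cycleDir a c b d i j * G i j := by simp [Y, mul_sum, mul_assoc]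
      _ = ε * (G a b - G a d - G c b + G c d) := by rw [sum_sum_cycleDir_mul]
  have hYab : Y a b = X a b + ε := by simp [Y, cycleDir, Pi.single_apply, hac, hbd]
  have hYcd : Y c d = X c d + ε := by simp [Y, cycleDir, Pi.single_apply, hac.symm, hbd.symm]
  have hYad : Y a d = X a d - ε := by simp [Y, cycleDir, Pi.single_apply, hac, hbd.symm]; ring
  have hYcb : Y c b = X c b - ε := by simp [Y, cycleDir, Pi.single_apply, hac.symm, hbd]; ring
  have hlog : 0 ≤ G a b - G a d - G c b + G c d := nonneg_of_mul_nonneg_right (by linarith) hε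
  have hab : 0 < X a b + ε := by linarith [hfeas.1 a b]
  have hcd : 0 < X c d + ε := by linarith [hfeas.1 c d]
  rw [← log_le_log_iff (by nlinarith) (by positivity), log_mul (by linarith) (by linarith),
    log_mul (by positivity) (by positivity), log_mul hab.ne' hcd.ne', log_exp]
  simp only [G, hYab, hYcd, hYad, hYcb] at hlog
  linarith

lemma entOT_cycle (hfeas : entOTfeas u v X)
    (hopt : ∀ Y, entOTfeas u v Y → entOTobj C X ≤ entOTobj C Y) (a b c d : Fin r) :
    X a d * X c b ≤ exp (C a b + C c d - C a d - C c b) * (X a b * X c d) := by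
  rcases eq_or_ne a c with rfl | hac
  · simp [mul_comm]
  rcases eq_or_ne b d with rfl | hbd
  · simp
  have := hfeas.1 a b
  have := hfeas.1 c d
  rcases (hfeas.1 a d).eq_or_lt with had | had
  · rw [← had, zero_mul]; positivity
  rcases (hfeas.1 c b).eq_or_lt with hcb | hcb
  · rw [← hcb, mul_zero]; positivity
  -- `X a b` or `X c d` may vanish, so only `ε > 0` is usable; both sides are continuous in `ε`
  refine le_of_tendsto_of_tendsto (b := 𝓝[>] 0)
    (f := fun ε => (X a d - ε) * (X c b - ε))
    (g := fun ε => exp (C a b + C c d - C a d - C c b) * ((X a b + ε) * (X c d + ε)))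
    ?_ ?_ ?_
  · exact ((Continuous.tendsto' (by fun_prop) 0 _ (by simp)).mono_left nhdsWithin_le_nhds)
  · exact ((Continuous.tendsto' (by fun_prop) 0 _ (by simp)).mono_left nhdsWithin_le_nhds)
  · filter_upwards [Ioo_mem_nhdsGT (lt_min had hcb)] with ε ⟨hε, hεmin⟩
    exact entOT_cycle_of_pos hfeas hopt hac hbd hε (hεmin.trans_le (min_le_left _ _))
      (hεmin.trans_le (min_le_right _ _))

lemma entOT_mul_le_exp_mul (hfeas : entOTfeas u v X)
    (hopt : ∀ Y, entOTfeas u v Y → entOTobj C X ≤ entOTobj C Y) (husum : ∑ i, u i = 1)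
    (a b c d : Fin r) :
    X a d * X c b ≤ exp (4 * ⨆ i, ⨆ j, |C i j|) * X a b := by
  have := hfeas.1 a b
  have := hfeas.1 c d
  calc X a d * X c b ≤ exp (C a b + C c d - C a d - C c b) * (X a b * X c d) :=
        entOT_cycle hfeas hopt a b c d
    _ ≤ exp (4 * ⨆ i, ⨆ j, |C i j|) * (X a b * 1) := by
        gcongr
        · exact cycle_cost_le C a b c d
        · exact hfeas.le_one husum c d
    _ = exp (4 * ⨆ i, ⨆ j, |C i j|) * X a b := by ring

end Optimality

theorem entOT_entry_lower_bound_general (r : ℕ) (C : Fin r → Fin r → ℝ) (u v : Fin r → ℝ)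
    (husum : ∑ i, u i = 1)
    (X : Fin r → Fin r → ℝ) (hfeas : entOTfeas u v X)
    (hopt : ∀ Y, entOTfeas u v Y → entOTobj C X ≤ entOTobj C Y) :
    ∀ i j, (min (⨅ i : Fin r, u i) (⨅ j : Fin r, v j)) ^ 2 /
        ((r : ℝ) ^ 2 * Real.exp (4 * ⨆ i : Fin r, ⨆ j : Fin r, |C i j|)) ≤ X i j := by
  intro i j
  have : Nonempty (Fin r) := ⟨i⟩
  set m := min (⨅ i : Fin r, u i) (⨅ j : Fin r, v j)
  have hr : (0 : ℝ) < r := by simpa using Fintype.card_pos (α := Fin r)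
  obtain ⟨d, hd⟩ := exists_sum_div_card_le (X i)
  obtain ⟨c, hc⟩ := exists_sum_div_card_le (X · j)
  rw [hfeas.2.1, Fintype.card_fin, div_le_iff₀ hr] at hd
  rw [hfeas.2.2, Fintype.card_fin, div_le_iff₀ hr] at hc
  have hm0 : 0 ≤ m := le_min (le_ciInf hfeas.left_nonneg) (le_ciInf hfeas.right_nonneg)
  have hmu : m ≤ u i := (min_le_left _ _).trans (Finite.ciInf_le u i)
  have hmv : m ≤ v j := (min_le_right _ _).trans (Finite.ciInf_le v j)
  rw [div_le_iff₀ (by positivity)]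
  calc m ^ 2 ≤ u i * v j := by rw [sq]; exact mul_le_mul hmu hmv hm0 (hfeas.left_nonneg i)
    _ ≤ (X i d * r) * (X c j * r) :=
        mul_le_mul hd hc (hfeas.right_nonneg j) (mul_nonneg (hfeas.1 i d) hr.le)
    _ = r ^ 2 * (X i d * X c j) := by ring
    _ ≤ r ^ 2 * (exp (4 * ⨆ i, ⨆ j, |C i j|) * X i j) :=
        mul_le_mul_of_nonneg_left (entOT_mul_le_exp_mul hfeas hopt husum i j c d) (by positivity)
    _ = X i j * (r ^ 2 * exp (4 * ⨆ i, ⨆ j, |C i j|)) := by ring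

/-- Entrywise lower bound on the optimal solution of the entropy-regularized OT problem:
`min_{i,j} X*(i,j) ≥ (min_{i,j}{u(i), v(j)})² / (r² exp[4‖C‖_∞])`. -/
theorem entOT_entry_lower_bound (r : ℕ) (hr : 0 < r) (C : Fin r → Fin r → ℝ) (u v : Fin r → ℝ)
    (hu : ∀ i, 0 < u i) (hv : ∀ i, 0 < v i)
    (husum : ∑ i, u i = 1) (hvsum : ∑ i, v i = 1)
    (X : Fin r → Fin r → ℝ) (hfeas : entOTfeas u v X)
    (hopt : ∀ Y, entOTfeas u v Y → entOTobj C X ≤ entOTobj C Y) :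
    ∀ i j, (min (⨅ i : Fin r, u i) (⨅ j : Fin r, v j)) ^ 2 /
        ((r : ℝ) ^ 2 * Real.exp (4 * ⨆ i : Fin r, ⨆ j : Fin r, |C i j|)) ≤ X i j :=
  entOT_entry_lower_bound_general r C u v husum X hfeas hopt
end

section
/- Suppose X = exp[−C + λ𝟙ᵀ + 𝟙μᵀ] ∈ ℝ^{r×r} has total entry sum equal to 1 and max_i λ(i) = max_i μ(i). Then max_i λ(i) ≥ −log r − ‖C‖_∞ / 2. -/
/-- If `X(i,j) = exp(−C(i,j) + λ(i) + μ(j))` has total entry sum 1 and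
`max λ = max μ`, then `max λ ≥ −log r − ‖C‖_∞ / 2`. -/
theorem dual_max_lower_bound (r : ℕ) (hr : 0 < r) (C : Fin r → Fin r → ℝ)
    (lam mu : Fin r → ℝ) (X : Fin r → Fin r → ℝ)
    (hX : ∀ i j, X i j = Real.exp (-C i j + lam i + mu j))
    (hsum : ∑ i, ∑ j, X i j = 1)
    (hmax : (⨆ i : Fin r, lam i) = ⨆ i : Fin r, mu i) :
    -Real.log r - (⨆ i : Fin r, ⨆ j : Fin r, |C i j|) / 2 ≤ ⨆ i : Fin r, lam i := by
  haveI : Nonempty (Fin r) := ⟨⟨0, hr⟩⟩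
  set M := ⨆ i : Fin r, lam i with hM
  set K := ⨆ i : Fin r, ⨆ j : Fin r, |C i j| with hK
  have hlam : ∀ i, lam i ≤ M := fun i => le_ciSup (Set.Finite.bddAbove (Set.finite_range _)) i
  have hmu : ∀ j, mu j ≤ M := by
    intro j
    calc mu j ≤ ⨆ j : Fin r, mu j :=
          le_ciSup (Set.Finite.bddAbove (Set.finite_range _)) j
      _ = M := hmax.symm
  have hCK : ∀ i j, |C i j| ≤ K := by
    intro i j
    calc |C i j| ≤ ⨆ j : Fin r, |C i j| :=
          le_ciSup (f := fun j => |C i j|) (Set.Finite.bddAbove (Set.finite_range _)) j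
      _ ≤ K := le_ciSup (f := fun i => ⨆ j : Fin r, |C i j|) (Set.Finite.bddAbove (Set.finite_range _)) i
  have hXle : ∀ i j, X i j ≤ Real.exp (K + 2 * M) := by
    intro i j
    rw [hX i j]
    apply Real.exp_le_exp.2
    have h1 : -C i j ≤ |C i j| := neg_le_abs _
    have := hCK i j
    have := hlam i
    have := hmu j
    linarith
  have hbound : (1 : ℝ) ≤ (r : ℝ) ^ 2 * Real.exp (K + 2 * M) := by
    rw [← hsum]
    calc ∑ i, ∑ j, X i j ≤ ∑ i : Fin r, ∑ j : Fin r, Real.exp (K + 2 * M) :=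
          Finset.sum_le_sum (fun i _ => Finset.sum_le_sum (fun j _ => hXle i j))
      _ = (r : ℝ) ^ 2 * Real.exp (K + 2 * M) := by
          simp [Finset.sum_const, Finset.card_univ]
          ring
  have hrpos : (0 : ℝ) < (r : ℝ) ^ 2 := by positivity
  have hexp : Real.exp (-Real.log ((r : ℝ) ^ 2)) ≤ Real.exp (K + 2 * M) := by
    rw [Real.exp_neg, Real.exp_log hrpos, inv_eq_one_div, div_le_iff₀ hrpos]
    linarith [hbound, mul_comm ((r : ℝ) ^ 2) (Real.exp (K + 2 * M))]
  have hlog : -Real.log ((r : ℝ) ^ 2) ≤ K + 2 * M := Real.exp_le_exp.1 hexp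
  have h2 : Real.log ((r : ℝ) ^ 2) = 2 * Real.log r := by
    rw [Real.log_pow]; push_cast; ring
  rw [h2] at hlog
  linarith
end

section
/- The function φ(Q) := 2⟨log Q, Q⟩ − ⟨log(Q𝟙), Q𝟙⟩ − ⟨log(Qᵀ𝟙), Qᵀ𝟙⟩ is convex on the set of entrywise nonnegative r×r matrices with total sum 1, where ⟨log A, A⟩ denotes Σ a log a over the entries (with 0 log 0 = 0). -/
open Real Finset

lemma mul_log_div' (x y : ℝ) (hx : 0 ≤ x) (hy : 0 < y) :
    x * Real.log (x / y) = x * Real.log x - x * Real.log y := by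
  rcases eq_or_lt_of_le hx with h | h
  · simp [← h]
  · rw [Real.log_div h.ne' hy.ne']; ring

lemma key (a b x1 y1 x2 y2 : ℝ) (ha : 0 ≤ a) (hb : 0 ≤ b) (hab : a + b = 1)
    (hx1 : 0 ≤ x1) (h1 : x1 ≤ y1) (hx2 : 0 ≤ x2) (h2 : x2 ≤ y2) :
    (a*x1+b*x2) * Real.log (a*x1+b*x2) - (a*x1+b*x2) * Real.log (a*y1+b*y2)
      ≤ a * (x1 * Real.log x1 - x1 * Real.log y1) + b * (x2 * Real.log x2 - x2 * Real.log y2) := by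
  have hy1 : 0 ≤ y1 := hx1.trans h1
  have hy2 : 0 ≤ y2 := hx2.trans h2
  rcases eq_or_lt_of_le ha with ha0 | ha0
  · have hb1 : b = 1 := by linarith
    simp [← ha0, hb1]
  rcases eq_or_lt_of_le hb with hb0 | hb0
  · have ha1 : a = 1 := by linarith
    simp [← hb0, ha1]
  rcases eq_or_lt_of_le hy1 with hy10 | hy10
  · have hx10 : x1 = 0 := le_antisymm (hy10 ▸ h1) hx1
    subst hx10
    rcases eq_or_lt_of_le hx2 with hx20 | hx20
    · simp [← hx20, ← hy10]
    · have hy2' : 0 < y2 := lt_of_lt_of_le hx20 h2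
      apply le_of_eq
      rw [← hy10]
      rw [show a * 0 + b * x2 = b * x2 by ring, show a * 0 + b * y2 = b * y2 by ring,
        Real.log_mul hb0.ne' hx20.ne', Real.log_mul hb0.ne' hy2'.ne']
      ring
  rcases eq_or_lt_of_le hy2 with hy20 | hy20
  · have hx20 : x2 = 0 := le_antisymm (hy20 ▸ h2) hx2
    subst hx20
    rcases eq_or_lt_of_le hx1 with hx10 | hx10
    · simp [← hx10, ← hy20]
    · have hy1' : 0 < y1 := lt_of_lt_of_le hx10 h1
      apply le_of_eq
      rw [← hy20]
      rw [show a * x1 + b * 0 = a * x1 by ring, show a * y1 + b * 0 = a * y1 by ring,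
        Real.log_mul ha0.ne' hx10.ne', Real.log_mul ha0.ne' hy1'.ne']
      ring
  set Y := a * y1 + b * y2 with hY
  have hYpos : 0 < Y := by positivity
  have hX : 0 ≤ a * x1 + b * x2 := by positivity
  have hm1 : x1 / y1 ∈ Set.Ici (0:ℝ) := Set.mem_Ici.2 (by positivity)
  have hm2 : x2 / y2 ∈ Set.Ici (0:ℝ) := Set.mem_Ici.2 (by positivity)
  have hw1 : (0:ℝ) ≤ a * y1 / Y := by positivity
  have hw2 : (0:ℝ) ≤ b * y2 / Y := by positivity
  have hws : a * y1 / Y + b * y2 / Y = 1 := by field_simp; exact hY.symm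
  have hconv := Real.convexOn_mul_log.2 hm1 hm2 hw1 hw2 hws
  simp only [smul_eq_mul] at hconv
  have harg : a * y1 / Y * (x1 / y1) + b * y2 / Y * (x2 / y2) = (a * x1 + b * x2) / Y := by
    field_simp
  rw [harg] at hconv
  have e1 : (a*x1+b*x2) * Real.log (a*x1+b*x2) - (a*x1+b*x2) * Real.log Y
      = Y * (((a*x1+b*x2)/Y) * Real.log ((a*x1+b*x2)/Y)) := by
    rw [← mul_log_div' _ _ hX hYpos]; field_simp
  have e2 : a * (x1 * Real.log x1 - x1 * Real.log y1)
      = Y * (a * y1 / Y * (x1 / y1 * Real.log (x1 / y1))) := by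
    rw [← mul_log_div' x1 y1 hx1 hy10]; field_simp
  have e3 : b * (x2 * Real.log x2 - x2 * Real.log y2)
      = Y * (b * y2 / Y * (x2 / y2 * Real.log (x2 / y2))) := by
    rw [← mul_log_div' x2 y2 hx2 hy20]; field_simp
  rw [e1, e2, e3, ← mul_add]
  exact mul_le_mul_of_nonneg_left hconv hYpos.le

/-- Strong subadditivity style convexity: the function
`φ(Q) = 2⟨log Q, Q⟩ − ⟨log(Q𝟙), Q𝟙⟩ − ⟨log(Qᵀ𝟙), Qᵀ𝟙⟩` is convex on the set of
entrywise nonnegative `r×r` matrices with total sum 1. -/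
theorem ssa_convex (r : ℕ) :
    ConvexOn ℝ {Q : Fin r → Fin r → ℝ | (∀ i j, 0 ≤ Q i j) ∧ ∑ i, ∑ j, Q i j = 1}
      (fun Q => 2 * (∑ i, ∑ j, Q i j * Real.log (Q i j))
        - (∑ i, (∑ j, Q i j) * Real.log (∑ j, Q i j))
        - (∑ j, (∑ i, Q i j) * Real.log (∑ i, Q i j))) := by
  have hF : ∀ Q : Fin r → Fin r → ℝ,
      2 * (∑ i, ∑ j, Q i j * Real.log (Q i j))
        - (∑ i, (∑ j, Q i j) * Real.log (∑ j, Q i j))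
        - (∑ j, (∑ i, Q i j) * Real.log (∑ i, Q i j))
      = (∑ i, ∑ j, (Q i j * Real.log (Q i j) - Q i j * Real.log (∑ j', Q i j')))
        + (∑ i, ∑ j, (Q i j * Real.log (Q i j) - Q i j * Real.log (∑ i', Q i' j))) := by
    intro Q
    simp only [Finset.sum_sub_distrib, Finset.sum_mul]
    rw [Finset.sum_comm (f := fun j i => Q i j * Real.log (∑ i', Q i' j))]
    ring
  constructor
  · intro Q1 h1 Q2 h2 a b ha hb hab
    refine ⟨fun i j => ?_, ?_⟩
    · simp only [Pi.add_apply, Pi.smul_apply, smul_eq_mul]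
      exact add_nonneg (mul_nonneg ha (h1.1 i j)) (mul_nonneg hb (h2.1 i j))
    · have e : ∑ i, ∑ j, (a • Q1 + b • Q2) i j
          = a * (∑ i, ∑ j, Q1 i j) + b * (∑ i, ∑ j, Q2 i j) := by
        simp [Finset.sum_add_distrib, Finset.mul_sum]
      rw [e, h1.2, h2.2]; linarith
  · intro Q1 h1 Q2 h2 a b ha hb hab
    simp only [smul_eq_mul]
    rw [hF, hF, hF]
    have hrow : (∑ i, ∑ j, ((a • Q1 + b • Q2) i j * Real.log ((a • Q1 + b • Q2) i j)
          - (a • Q1 + b • Q2) i j * Real.log (∑ j', (a • Q1 + b • Q2) i j')))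
        ≤ a * (∑ i, ∑ j, (Q1 i j * Real.log (Q1 i j) - Q1 i j * Real.log (∑ j', Q1 i j')))
          + b * (∑ i, ∑ j, (Q2 i j * Real.log (Q2 i j) - Q2 i j * Real.log (∑ j', Q2 i j'))) := by
      simp only [Finset.mul_sum, ← Finset.sum_add_distrib]
      refine Finset.sum_le_sum fun i _ => Finset.sum_le_sum fun j _ => ?_
      simp only [Pi.add_apply, Pi.smul_apply, smul_eq_mul]
      rw [show (∑ j', (a * Q1 i j' + b * Q2 i j')) = a * (∑ j', Q1 i j') + b * (∑ j', Q2 i j') by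
        simp [Finset.sum_add_distrib, Finset.mul_sum]]
      exact key a b _ _ _ _ ha hb hab (h1.1 i j)
        (Finset.single_le_sum (fun j' _ => h1.1 i j') (Finset.mem_univ j)) (h2.1 i j)
        (Finset.single_le_sum (fun j' _ => h2.1 i j') (Finset.mem_univ j))
    have hcol : (∑ i, ∑ j, ((a • Q1 + b • Q2) i j * Real.log ((a • Q1 + b • Q2) i j)
          - (a • Q1 + b • Q2) i j * Real.log (∑ i', (a • Q1 + b • Q2) i' j)))
        ≤ a * (∑ i, ∑ j, (Q1 i j * Real.log (Q1 i j) - Q1 i j * Real.log (∑ i', Q1 i' j)))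
          + b * (∑ i, ∑ j, (Q2 i j * Real.log (Q2 i j) - Q2 i j * Real.log (∑ i', Q2 i' j))) := by
      simp only [Finset.mul_sum, ← Finset.sum_add_distrib]
      refine Finset.sum_le_sum fun i _ => Finset.sum_le_sum fun j _ => ?_
      simp only [Pi.add_apply, Pi.smul_apply, smul_eq_mul]
      rw [show (∑ i', (a * Q1 i' j + b * Q2 i' j)) = a * (∑ i', Q1 i' j) + b * (∑ i', Q2 i' j) by
        simp [Finset.sum_add_distrib, Finset.mul_sum]]
      exact key a b _ _ _ _ ha hb hab (h1.1 i j)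
        (Finset.single_le_sum (fun i' _ => h1.1 i' j) (Finset.mem_univ i)) (h2.1 i j)
        (Finset.single_le_sum (fun i' _ => h2.1 i' j) (Finset.mem_univ i))
    linarith
end
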